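/- Let n ≥ 1, Z ∈ ℂ^{n×n}, and for each subset K of {1,…,n} with |K| = k define f(Z,K) = (1/C(n,k)) Σ_{J ⊆ {1,…,n}, |J|=k} |per(Z[J,K])/k!|². Then for any subset K of {1,…,n} and any ordered weak partition (W₁,…,W_d) of K, f(Z,K) ≤ Π_{r=1}^d f(Z,W_r). -/

import Mathlib

/-- The permanent of the submatrix of `Z` with rows in `J` and columns in `K`,
defined as a sum over bijections from `J` to `K` (it is `1` when `J = K = ∅`). -/
noncomputable def perSub {n : ℕ} (Z : Matrix (Fin n) (Fin n) ℂ) (J K : Finset (Fin n)) : ℂ :=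
  ∑ f ∈ Finset.univ.filter (fun f : {x // x ∈ J} → {x // x ∈ K} => Function.Bijective f),
    ∏ j : {x // x ∈ J}, Z j.1 (f j).1

/-- `f(Z,K) = (1/C(n,k)) ∑_{|J|=k} |per(Z[J,K])/k!|²` where `k = |K|`. -/
noncomputable def fZ {n : ℕ} (Z : Matrix (Fin n) (Fin n) ℂ) (K : Finset (Fin n)) : ℝ :=
  (1 / (n.choose K.card) : ℝ) *
    ∑ J ∈ Finset.powersetCard K.card (Finset.univ : Finset (Fin n)),
      ‖perSub Z J K / (K.card.factorial : ℂ)‖ ^ 2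

/-!
Laplace expansion along the column blocks `K₁`, `K₂` writes `per Z[J, K₁ ∪ K₂]` as the set
convolution `setConv` of `J₁ ↦ per Z[J₁, K₁]` and `J₂ ↦ per Z[J₂, K₂]`. The theorem then follows,
by induction on the number of blocks, from the sharp bound `‖a ⋆ b‖² ≤ Λ(n, k₁, k₂) ‖a‖² ‖b‖²` for
the ℓ²-norms over `k`-subsets of an `n`-set, because
`Λ(n, k₁, k₂) = C(n, k₁ + k₂) C(k₁ + k₂, k₁)² / (C(n, k₁) C(n, k₂))` (`convConst`) is exactly the
ratio of the normalisations `C(n, k) k!²` in `f`.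

The bound is proved by induction on the ground set. Removing a point `u` splits every sum
according to whether the index set contains `u`; Minkowski's inequality handles the two
convolution terms that arise, and what remains is a four-term AM-GM inequality whose coefficients
are the ratios of `Λ` at `n` and at `n + 1`.
-/

open Finset

noncomputable def convConst (n k₁ k₂ : ℕ) : ℝ :=
  (n.choose (k₁ + k₂) * (k₁ + k₂).choose k₁ ^ 2 : ℝ) / (n.choose k₁ * n.choose k₂)

lemma convConst_nonneg (n k₁ k₂ : ℕ) : 0 ≤ convConst n k₁ k₂ := by
  unfold convConst; positivity

lemma convConst_pos {n k₁ k₂ : ℕ} (h : k₁ + k₂ ≤ n) : 0 < convConst n k₁ k₂ := by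
  have h₁ : (0 : ℝ) < n.choose k₁ := by exact_mod_cast Nat.choose_pos (by omega)
  have h₂ : (0 : ℝ) < n.choose k₂ := by exact_mod_cast Nat.choose_pos (by omega)
  have h₃ : (0 : ℝ) < n.choose (k₁ + k₂) := by exact_mod_cast Nat.choose_pos h
  have h₄ : (0 : ℝ) < (k₁ + k₂).choose k₁ := by exact_mod_cast Nat.choose_pos (by omega)
  unfold convConst
  positivity

lemma convConst_of_lt {n k₁ k₂ : ℕ} (h : n < k₁ + k₂) : convConst n k₁ k₂ = 0 := by
  simp [convConst, Nat.choose_eq_zero_of_lt h]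

lemma convConst_comm (n k₁ k₂ : ℕ) : convConst n k₁ k₂ = convConst n k₂ k₁ := by
  rw [convConst, convConst, add_comm k₂, Nat.choose_symm_add, mul_comm (n.choose k₂ : ℝ)]

lemma convConst_zero_left {n k : ℕ} (h : k ≤ n) : convConst n 0 k = 1 := by
  have : (n.choose k : ℝ) ≠ 0 := by exact_mod_cast (Nat.choose_pos h).ne'
  simp [convConst, this]

lemma convConst_mul {n k₁ k₂ : ℕ} (h : k₁ + k₂ ≤ n) :
    convConst n k₁ k₂ * ((n.choose k₁ * k₁.factorial ^ 2) * (n.choose k₂ * k₂.factorial ^ 2))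
      = n.choose (k₁ + k₂) * (k₁ + k₂).factorial ^ 2 := by
  have h₁ : (n.choose k₁ : ℝ) ≠ 0 := by exact_mod_cast (Nat.choose_pos (by omega)).ne'
  have h₂ : (n.choose k₂ : ℝ) ≠ 0 := by exact_mod_cast (Nat.choose_pos (by omega)).ne'
  have hfac : ((k₁ + k₂).choose k₁ * k₁.factorial * k₂.factorial : ℝ) = (k₁ + k₂).factorial := by
    rw [Nat.choose_symm_add]; exact_mod_cast Nat.add_choose_mul_factorial_mul_factorial k₁ k₂
  rw [convConst, ← hfac]
  field_simp

lemma convConst_succ {N k₁ k₂ m : ℕ} (hN : k₁ + k₂ + m = N) :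
    ((m + 1) * (N + 1) : ℝ) * convConst (N + 1) k₁ k₂
      = ((k₁ + m + 1) * (k₂ + m + 1) : ℝ) * convConst N k₁ k₂ := by
  subst hN
  have e (k : ℕ) (hk : k ≤ k₁ + k₂ + m) : ((k₁ + k₂ + m + 1).choose k : ℝ)
      = (k₁ + k₂ + m).choose k * (k₁ + k₂ + m + 1) / (k₁ + k₂ + m + 1 - k : ℕ) := by
    rw [eq_div_iff (by norm_cast; omega)]
    exact_mod_cast (Nat.choose_mul_succ_eq _ k).symm
  have c₁ : ((k₁ + k₂ + m).choose k₁ : ℝ) ≠ 0 := by exact_mod_cast (Nat.choose_pos (by omega)).ne'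
  have c₂ : ((k₁ + k₂ + m).choose k₂ : ℝ) ≠ 0 := by exact_mod_cast (Nat.choose_pos (by omega)).ne'
  rw [convConst, convConst, e _ (by omega), e k₁ (by omega), e k₂ (by omega),
    show k₁ + k₂ + m + 1 - (k₁ + k₂) = m + 1 by omega,
    show k₁ + k₂ + m + 1 - k₁ = k₂ + m + 1 by omega,
    show k₁ + k₂ + m + 1 - k₂ = k₁ + m + 1 by omega]
  field_simp
  push_cast
  ring

lemma convConst_succ_left {N k₁ k₂ m : ℕ} (hN : k₁ + k₂ + m = N) :
    ((k₁ + 1) * (N + 1) : ℝ) * convConst (N + 1) (k₁ + 1) k₂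
      = ((k₁ + k₂ + 1) * (k₁ + m + 1) : ℝ) * convConst N k₁ k₂ := by
  subst hN
  have e (M k : ℕ) : ((M + 1).choose (k + 1) : ℝ) = (M + 1) * M.choose k / (k + 1) := by
    rw [eq_div_iff (by positivity)]
    exact_mod_cast (Nat.add_one_mul_choose_eq M k).symm
  have e₂ : ((k₁ + k₂ + m + 1).choose k₂ : ℝ)
      = (k₁ + k₂ + m).choose k₂ * (k₁ + k₂ + m + 1) / (k₁ + m + 1) := by
    rw [eq_div_iff (by positivity)]
    have := Nat.choose_mul_succ_eq (k₁ + k₂ + m) k₂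
    rw [show k₁ + k₂ + m + 1 - k₂ = k₁ + m + 1 by omega] at this
    exact_mod_cast this.symm
  have c₁ : ((k₁ + k₂ + m).choose k₁ : ℝ) ≠ 0 := by exact_mod_cast (Nat.choose_pos (by omega)).ne'
  have c₂ : ((k₁ + k₂ + m).choose k₂ : ℝ) ≠ 0 := by exact_mod_cast (Nat.choose_pos (by omega)).ne'
  rw [convConst, convConst, show k₁ + 1 + k₂ = k₁ + k₂ + 1 by omega, e, e, e, e₂]
  field_simp
  push_cast
  ring

lemma convConst_pred_left (A B m : ℕ) :
    convConst (A + B + 1 + m) A (B + 1) = convConst (A + B + 1 + m + 1) (A + 1) (B + 1)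
      * ((A + 1) * (A + B + m + 2) / ((A + B + 2) * (A + m + 1))) := by
  have := convConst_succ_left (N := A + B + 1 + m) (k₁ := A) (k₂ := B + 1) (m := m) (by omega)
  push_cast at this
  field_simp
  linear_combination -this

lemma convConst_pred_right (A B m : ℕ) :
    convConst (A + B + 1 + m) (A + 1) B = convConst (A + B + 1 + m + 1) (A + 1) (B + 1)
      * ((B + 1) * (A + B + m + 2) / ((A + B + 2) * (B + m + 1))) := by
  rw [convConst_comm, convConst_comm _ (A + 1), show A + B + 1 + m = B + A + 1 + m by ring,
    convConst_pred_left]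
  ring_nf

lemma convConst_pred (A B m : ℕ) :
    convConst (A + B + 1 + m) (A + 1) (B + 1) = convConst (A + B + 1 + m + 1) (A + 1) (B + 1)
      * (m * (A + B + m + 2) / ((A + m + 1) * (B + m + 1))) := by
  rcases m with _ | m
  · simp [convConst_of_lt (show A + B + 1 + 0 < A + 1 + (B + 1) by omega)]
  have := convConst_succ (N := A + B + 1 + (m + 1)) (k₁ := A + 1) (k₂ := B + 1) (m := m) (by omega)
  push_cast at this ⊢
  field_simp
  linear_combination -this

/-- The hypotheses on `e` say `√(αβ) = √((1 - α)(1 - β)) + √(1 - γ)`; since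
`x₀y₀ · x₁y₁ = x₁y₀ · x₀y₁`, this is what makes AM-GM on the two pairs of "missing" terms
`(1 - γ) x₀y₀ + x₁y₁` and `(1 - α) x₁y₀ + (1 - β) x₀y₁` enough to absorb the cross term. -/
lemma mul_add_sq_sqrt_add_sqrt_le {L α β γ e x₀ x₁ y₀ y₁ : ℝ} (hL : 0 ≤ L)
    (hα₀ : 0 ≤ α) (hα₁ : α ≤ 1) (hβ₀ : 0 ≤ β) (hβ₁ : β ≤ 1) (hγ : γ ≤ 1) (he : 0 ≤ e)
    (he_sq : e ^ 2 = (1 - α) * (1 - β) * (1 - γ))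
    (hαβ : α * β = (1 - α) * (1 - β) + (1 - γ) + 2 * e)
    (hx₀ : 0 ≤ x₀) (hx₁ : 0 ≤ x₁) (hy₀ : 0 ≤ y₀) (hy₁ : 0 ≤ y₁) :
    L * γ * (x₀ * y₀) + (√(L * β * (x₀ * y₁)) + √(L * α * (x₁ * y₀))) ^ 2
      ≤ L * ((x₀ + x₁) * (y₀ + y₁)) := by
  have hα' : 0 ≤ 1 - α := by linarith
  have hβ' : 0 ≤ 1 - β := by linarith
  have hγ' : 0 ≤ 1 - γ := by linarith
  set s := √(L * α * (x₁ * y₀))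
  set t := √(L * β * (x₀ * y₁))
  set w := x₀ * x₁ * y₀ * y₁
  have hs : s ^ 2 = L * α * (x₁ * y₀) := Real.sq_sqrt (by positivity)
  have ht : t ^ 2 = L * β * (x₀ * y₁) := Real.sq_sqrt (by positivity)
  set u := (1 - γ) * (x₀ * y₀) + x₁ * y₁
  set v := (1 - α) * (x₁ * y₀) + (1 - β) * (x₀ * y₁)
  have hu : 4 * (1 - γ) * w ≤ u ^ 2 := by nlinarith [sq_nonneg ((1 - γ) * (x₀ * y₀) - x₁ * y₁)]
  have hv : 4 * ((1 - α) * (1 - β)) * w ≤ v ^ 2 := by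
    nlinarith [sq_nonneg ((1 - α) * (x₁ * y₀) - (1 - β) * (x₀ * y₁))]
  have huv : 4 * e * w ≤ u * v := by
    refine (pow_le_pow_iff_left₀ (by positivity) (by positivity) two_ne_zero).1 ?_
    calc (4 * e * w) ^ 2 = 4 * (1 - γ) * w * (4 * ((1 - α) * (1 - β)) * w) := by
          rw [mul_pow, mul_pow, he_sq]; ring
      _ ≤ u ^ 2 * v ^ 2 := mul_le_mul hu hv (by positivity) (sq_nonneg u)
      _ = (u * v) ^ 2 := by ring
  have hst : 2 * (s * t) ≤ L * (u + v) := by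
    refine (pow_le_pow_iff_left₀ (by positivity) (by positivity) two_ne_zero).1 ?_
    calc (2 * (s * t)) ^ 2 = L ^ 2 * (4 * (α * β) * w) := by rw [mul_pow, mul_pow, hs, ht]; ring
      _ ≤ L ^ 2 * (u + v) ^ 2 := by
          gcongr
          rw [hαβ]; nlinarith
      _ = (L * (u + v)) ^ 2 := by ring
  nlinarith

lemma convConst_step (N A B : ℕ) {x₀ x₁ y₀ y₁ : ℝ}
    (hx₀ : 0 ≤ x₀) (hx₁ : 0 ≤ x₁) (hy₀ : 0 ≤ y₀) (hy₁ : 0 ≤ y₁) :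
    convConst N (A + 1) (B + 1) * (x₀ * y₀)
        + (√(convConst N (A + 1) B * (x₀ * y₁)) + √(convConst N A (B + 1) * (x₁ * y₀))) ^ 2
      ≤ convConst (N + 1) (A + 1) (B + 1) * ((x₀ + x₁) * (y₀ + y₁)) := by
  by_cases hN : N < A + B + 1
  · rw [convConst_of_lt (show N < A + 1 + (B + 1) by omega),
      convConst_of_lt (show N < A + 1 + B by omega),
      convConst_of_lt (show N < A + (B + 1) by omega)]
    simpa using mul_nonneg (convConst_nonneg _ _ _) (by positivity)
  obtain ⟨m, rfl⟩ : ∃ m, N = A + B + 1 + m := ⟨N - (A + B + 1), by omega⟩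
  rw [convConst_pred_left, convConst_pred_right, convConst_pred]
  refine mul_add_sq_sqrt_add_sqrt_le (convConst_nonneg _ _ _)
    (e := (A + 1) * (B + 1) * m / ((A + B + 2) * (A + m + 1) * (B + m + 1)))
    (by positivity) ?_ (by positivity) ?_ ?_ (by positivity) ?_ ?_ hx₀ hx₁ hy₀ hy₁
  · rw [div_le_one (by positivity)]; nlinarith
  · rw [div_le_one (by positivity)]; nlinarith
  · rw [div_le_one (by positivity)]; nlinarith
  · field_simp; ring
  · field_simp; ring

lemma sum_norm_add_sq_le {κ E : Type*} [SeminormedAddCommGroup E] (T : Finset κ) (f g : κ → E) :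
    ∑ i ∈ T, ‖f i + g i‖ ^ 2 ≤ (√(∑ i ∈ T, ‖f i‖ ^ 2) + √(∑ i ∈ T, ‖g i‖ ^ 2)) ^ 2 := by
  have hcs := Real.sum_mul_le_sqrt_mul_sqrt T (fun i => ‖f i‖) (fun i => ‖g i‖)
  calc ∑ i ∈ T, ‖f i + g i‖ ^ 2
      ≤ ∑ i ∈ T, (‖f i‖ ^ 2 + ‖g i‖ ^ 2 + 2 * (‖f i‖ * ‖g i‖)) :=
        sum_le_sum fun i _ => by nlinarith [norm_add_le (f i) (g i), norm_nonneg (f i + g i)]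
    _ = ∑ i ∈ T, ‖f i‖ ^ 2 + ∑ i ∈ T, ‖g i‖ ^ 2 + 2 * ∑ i ∈ T, ‖f i‖ * ‖g i‖ := by
        rw [sum_add_distrib, sum_add_distrib, mul_sum]
    _ ≤ _ := by
        rw [add_sq, Real.sq_sqrt (by positivity), Real.sq_sqrt (by positivity)]
        linarith

section SetConv

variable {ι R : Type*} [SeminormedRing R]

noncomputable def sumSqNorm (U : Finset ι) (k : ℕ) (a : Finset ι → R) : ℝ :=
  ∑ J ∈ U.powersetCard k, ‖a J‖ ^ 2

lemma sumSqNorm_nonneg (U : Finset ι) (k : ℕ) (a : Finset ι → R) : 0 ≤ sumSqNorm U k a := by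
  unfold sumSqNorm; positivity

lemma sumSqNorm_of_lt {U : Finset ι} {k : ℕ} (h : #U < k) (a : Finset ι → R) :
    sumSqNorm U k a = 0 := by
  rw [sumSqNorm, powersetCard_eq_empty.2 h, sum_empty]

lemma sumSqNorm_zero (U : Finset ι) (a : Finset ι → R) : sumSqNorm U 0 a = ‖a ∅‖ ^ 2 := by
  rw [sumSqNorm, powersetCard_zero, sum_singleton]

variable [DecidableEq ι]

def setConv (k : ℕ) (a b : Finset ι → R) (J : Finset ι) : R :=
  ∑ J₁ ∈ J.powersetCard k, a J₁ * b (J \ J₁)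

lemma sum_powersetCard_succ_insert {M : Type*} [AddCommMonoid M] {u : ι} {s : Finset ι}
    (hu : u ∉ s) (k : ℕ) (F : Finset ι → M) :
    ∑ T ∈ (insert u s).powersetCard (k + 1), F T
      = ∑ T ∈ s.powersetCard (k + 1), F T + ∑ T ∈ s.powersetCard k, F (insert u T) := by
  have notMem {T k} (hT : T ∈ s.powersetCard k) : u ∉ T := fun h => hu ((mem_powersetCard.1 hT).1 h)
  rw [powersetCard_succ_insert hu, sum_union, sum_image]
  · intro T hT T' hT' h
    rw [← erase_insert (notMem hT), ← erase_insert (notMem hT'), h]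
  · refine disjoint_left.2 fun T hT hT' => ?_
    obtain ⟨T', hT', rfl⟩ := mem_image.1 hT'
    exact notMem hT (mem_insert_self u T')

lemma sumSqNorm_insert {u : ι} {s : Finset ι} (hu : u ∉ s) (k : ℕ) (a : Finset ι → R) :
    sumSqNorm (insert u s) (k + 1) a
      = sumSqNorm s (k + 1) a + sumSqNorm s k (fun T => a (insert u T)) :=
  sum_powersetCard_succ_insert hu k _

lemma setConv_insert {u : ι} {S : Finset ι} (hu : u ∉ S) (k : ℕ) (a b : Finset ι → R) :
    setConv (k + 1) a b (insert u S)
      = setConv (k + 1) a (fun T => b (insert u T)) S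
        + setConv k (fun T => a (insert u T)) b S := by
  rw [setConv, sum_powersetCard_succ_insert hu]
  congr 1 <;> refine sum_congr rfl fun T hT => ?_
  · have huT : u ∉ T := fun h => hu ((mem_powersetCard.1 hT).1 h)
    rw [insert_sdiff_of_notMem _ huT]
  · rw [insert_sdiff_insert, sdiff_insert_of_notMem hu]

lemma sumSqNorm_setConv_zero_left_le (U : Finset ι) (k : ℕ) (a b : Finset ι → R) :
    sumSqNorm U (0 + k) (setConv 0 a b)
      ≤ convConst #U 0 k * (sumSqNorm U 0 a * sumSqNorm U k b) := by
  rw [zero_add]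
  rcases lt_or_ge #U k with h | h
  · rw [sumSqNorm_of_lt h, sumSqNorm_of_lt h, mul_zero, mul_zero]
  rw [convConst_zero_left h, one_mul, sumSqNorm_zero, sumSqNorm, sumSqNorm, mul_sum]
  refine sum_le_sum fun J _ => ?_
  rw [setConv, powersetCard_zero, sum_singleton, sdiff_empty, ← mul_pow]
  exact pow_le_pow_left₀ (norm_nonneg _) (norm_mul_le _ _) 2

lemma sumSqNorm_setConv_zero_right_le (U : Finset ι) (k : ℕ) (a b : Finset ι → R) :
    sumSqNorm U (k + 0) (setConv k a b)
      ≤ convConst #U k 0 * (sumSqNorm U k a * sumSqNorm U 0 b) := by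
  rw [add_zero]
  rcases lt_or_ge #U k with h | h
  · rw [sumSqNorm_of_lt h, sumSqNorm_of_lt h, zero_mul, mul_zero]
  rw [convConst_comm, convConst_zero_left h, one_mul, sumSqNorm_zero, sumSqNorm, sumSqNorm, sum_mul]
  refine sum_le_sum fun J hJ => ?_
  rw [setConv, ← (mem_powersetCard.1 hJ).2, powersetCard_self, sum_singleton, sdiff_self, ← mul_pow]
  exact pow_le_pow_left₀ (norm_nonneg _) (norm_mul_le _ _) 2

lemma sumSqNorm_setConv_insert_le {u : ι} {s : Finset ι} (hu : u ∉ s)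
    (ih : ∀ (k₁ k₂ : ℕ) (a b : Finset ι → R), sumSqNorm s (k₁ + k₂) (setConv k₁ a b)
      ≤ convConst #s k₁ k₂ * (sumSqNorm s k₁ a * sumSqNorm s k₂ b))
    (A B : ℕ) (a b : Finset ι → R) :
    sumSqNorm (insert u s) (A + 1 + (B + 1)) (setConv (A + 1) a b)
      ≤ convConst #(insert u s) (A + 1) (B + 1)
        * (sumSqNorm (insert u s) (A + 1) a * sumSqNorm (insert u s) (B + 1) b) := by
  set a' : Finset ι → R := fun T => a (insert u T)
  set b' : Finset ι → R := fun T => b (insert u T)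
  have h_split : sumSqNorm s (A + B + 1) (fun S => setConv (A + 1) a b (insert u S))
      = ∑ S ∈ s.powersetCard (A + B + 1), ‖setConv (A + 1) a b' S + setConv A a' b S‖ ^ 2 :=
    sum_congr rfl fun S hS => by
      dsimp only
      rw [setConv_insert fun h => hu ((mem_powersetCard.1 hS).1 h)]
  have ih₁ := ih (A + 1) (B + 1) a b
  have ih₂ := ih (A + 1) B a b'
  have ih₃ := ih A (B + 1) a' b
  rw [show A + 1 + B = A + B + 1 by omega] at ih₂
  rw [show A + (B + 1) = A + B + 1 by omega] at ih₃
  calc sumSqNorm (insert u s) (A + 1 + (B + 1)) (setConv (A + 1) a b)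
      = sumSqNorm s (A + 1 + (B + 1)) (setConv (A + 1) a b)
          + sumSqNorm s (A + B + 1) (fun S => setConv (A + 1) a b (insert u S)) := by
        rw [show A + 1 + (B + 1) = A + B + 1 + 1 by omega]
        exact sumSqNorm_insert hu _ _
    _ ≤ convConst #s (A + 1) (B + 1) * (sumSqNorm s (A + 1) a * sumSqNorm s (B + 1) b)
          + (√(convConst #s (A + 1) B * (sumSqNorm s (A + 1) a * sumSqNorm s B b'))
            + √(convConst #s A (B + 1) * (sumSqNorm s A a' * sumSqNorm s (B + 1) b))) ^ 2 := by
        rw [h_split]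
        refine add_le_add ih₁ ((sum_norm_add_sq_le _ _ _).trans ?_)
        gcongr
        exacts [ih₂, ih₃]
    _ ≤ convConst (#s + 1) (A + 1) (B + 1)
          * ((sumSqNorm s (A + 1) a + sumSqNorm s A a')
            * (sumSqNorm s (B + 1) b + sumSqNorm s B b')) :=
        convConst_step _ _ _ (sumSqNorm_nonneg _ _ _) (sumSqNorm_nonneg _ _ _)
          (sumSqNorm_nonneg _ _ _) (sumSqNorm_nonneg _ _ _)
    _ = _ := by rw [card_insert_of_notMem hu, sumSqNorm_insert hu, sumSqNorm_insert hu]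

theorem sumSqNorm_setConv_le (U : Finset ι) (k₁ k₂ : ℕ) (a b : Finset ι → R) :
    sumSqNorm U (k₁ + k₂) (setConv k₁ a b)
      ≤ convConst #U k₁ k₂ * (sumSqNorm U k₁ a * sumSqNorm U k₂ b) := by
  induction U using Finset.induction_on generalizing k₁ k₂ a b with
  | empty =>
    rcases k₁ with _ | A
    · exact sumSqNorm_setConv_zero_left_le _ _ _ _
    rw [sumSqNorm_of_lt (by simp), sumSqNorm_of_lt (k := A + 1) (by simp), zero_mul, mul_zero]
  | @insert u s hu ih =>
    rcases k₁ with _ | A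
    · exact sumSqNorm_setConv_zero_left_le _ _ _ _
    rcases k₂ with _ | B
    · exact sumSqNorm_setConv_zero_right_le _ _ _ _
    exact sumSqNorm_setConv_insert_le hu ih A B a b

end SetConv

lemma prod_coe_sort_eq_mul_prod_sdiff {α M : Type*} [DecidableEq α] [CommMonoid M]
    {s t : Finset α} (h : t ⊆ s) (F : s → M) :
    ∏ x : s, F x
      = (∏ x : t, F ⟨x, h x.2⟩) * ∏ x : (s \ t : Finset α), F ⟨x, (mem_sdiff.1 x.2).1⟩ := by
  let G : α → M := fun x => if hx : x ∈ s then F ⟨x, hx⟩ else 1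
  have hG {u : Finset α} (hu : u ⊆ s) : ∏ x : u, F ⟨x, hu x.2⟩ = ∏ x ∈ u, G x := by
    rw [← prod_coe_sort u G]
    exact prod_congr rfl fun x _ => by simp [G, hu x.2]
  rw [hG h, hG sdiff_subset, mul_comm, prod_sdiff h, ← hG subset_rfl]

section Laplace

variable {α : Type*} [DecidableEq α] {J J₁ K₁ K₂ : Finset α}

def rowsInto {K : Finset α} (K₁ : Finset α) (f : J → K) : Finset α :=
  {x ∈ J | ∃ h : x ∈ J, (f ⟨x, h⟩ : α) ∈ K₁}

lemma mem_rowsInto {K : Finset α} {f : J → K} (j : J) :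
    (j : α) ∈ rowsInto K₁ f ↔ (f j : α) ∈ K₁ := by
  simp [rowsInto]

lemma rowsInto_subset {K : Finset α} (f : J → K) : rowsInto K₁ f ⊆ J := filter_subset _ _

def glue (p₁ : J₁ → K₁) (p₂ : (J \ J₁ : Finset α) → K₂) (x : J) : (K₁ ∪ K₂ : Finset α) :=
  if h : (x : α) ∈ J₁ then ⟨p₁ ⟨x, h⟩, mem_union_left _ (p₁ _).2⟩
  else ⟨p₂ ⟨x, mem_sdiff.2 ⟨x.2, h⟩⟩, mem_union_right _ (p₂ _).2⟩

lemma glue_of_mem (p₁ : J₁ → K₁) (p₂ : (J \ J₁ : Finset α) → K₂) {x : J} (h : (x : α) ∈ J₁) :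
    (glue p₁ p₂ x : α) = p₁ ⟨x, h⟩ := by
  simp [glue, h]

lemma glue_of_notMem (p₁ : J₁ → K₁) (p₂ : (J \ J₁ : Finset α) → K₂) {x : J} (h : (x : α) ∉ J₁) :
    (glue p₁ p₂ x : α) = p₂ ⟨x, mem_sdiff.2 ⟨x.2, h⟩⟩ := by
  simp [glue, h]

lemma glue_bijective (hK : Disjoint K₁ K₂) (hJ₁ : J₁ ⊆ J) {p₁ : J₁ → K₁}
    {p₂ : (J \ J₁ : Finset α) → K₂} (hp₁ : p₁.Bijective) (hp₂ : p₂.Bijective) :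
    (glue p₁ p₂).Bijective := by
  constructor
  · intro x y hxy
    have hval := congrArg Subtype.val hxy
    by_cases hx : (x : α) ∈ J₁ <;> by_cases hy : (y : α) ∈ J₁
    · rw [glue_of_mem _ _ hx, glue_of_mem _ _ hy] at hval
      exact Subtype.ext (by simpa using hp₁.1 (Subtype.ext hval))
    · rw [glue_of_mem _ _ hx, glue_of_notMem _ _ hy] at hval
      exact absurd (hval ▸ (p₁ _).2) (disjoint_right.1 hK (p₂ _).2)
    · rw [glue_of_notMem _ _ hx, glue_of_mem _ _ hy] at hval
      exact absurd (hval ▸ (p₂ _).2) (disjoint_left.1 hK (p₁ _).2)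
    · rw [glue_of_notMem _ _ hx, glue_of_notMem _ _ hy] at hval
      exact Subtype.ext (by simpa using hp₂.1 (Subtype.ext hval))
  · rintro ⟨k, hk⟩
    rcases mem_union.1 hk with hk | hk
    · obtain ⟨x, hx⟩ := hp₁.2 ⟨k, hk⟩
      exact ⟨⟨x, hJ₁ x.2⟩, Subtype.ext ((glue_of_mem p₁ p₂ (x := ⟨x, hJ₁ x.2⟩) x.2).trans
        (congrArg Subtype.val hx : (p₁ x : α) = k))⟩
    · obtain ⟨x, hx⟩ := hp₂.2 ⟨k, hk⟩
      exact ⟨⟨x, (mem_sdiff.1 x.2).1⟩, Subtype.ext ((glue_of_notMem p₁ p₂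
        (x := ⟨x, (mem_sdiff.1 x.2).1⟩) (mem_sdiff.1 x.2).2).trans
        (congrArg Subtype.val hx : (p₂ x : α) = k))⟩

lemma rowsInto_glue (hK : Disjoint K₁ K₂) (hJ₁ : J₁ ⊆ J) (p₁ : J₁ → K₁)
    (p₂ : (J \ J₁ : Finset α) → K₂) : rowsInto K₁ (glue p₁ p₂) = J₁ := by
  ext x
  constructor
  · intro hx
    have hxJ := rowsInto_subset _ hx
    by_contra hx₁
    rw [mem_rowsInto (j := ⟨x, hxJ⟩), glue_of_notMem _ _ hx₁] at hx
    exact disjoint_right.1 hK (p₂ _).2 hx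
  · intro hx
    rw [mem_rowsInto (j := ⟨x, hJ₁ hx⟩), glue_of_mem _ _ hx]
    exact (p₁ _).2

def restrictLeft (f : J → (K₁ ∪ K₂ : Finset α)) (hf : rowsInto K₁ f = J₁) (j : J₁) : K₁ :=
  have hj : (j : α) ∈ rowsInto K₁ f := hf ▸ j.2
  ⟨f ⟨j, rowsInto_subset f hj⟩, (mem_rowsInto (f := f) (K₁ := K₁) ⟨j, _⟩).1 hj⟩

def restrictRight (f : J → (K₁ ∪ K₂ : Finset α)) (hf : rowsInto K₁ f = J₁)
    (j : (J \ J₁ : Finset α)) : K₂ :=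
  ⟨f ⟨j, (mem_sdiff.1 j.2).1⟩, (mem_union.1 (f _).2).resolve_left fun h =>
    (mem_sdiff.1 j.2).2 (hf ▸ (mem_rowsInto (f := f) ⟨j, _⟩).2 h)⟩

lemma restrictLeft_bijective {f : J → (K₁ ∪ K₂ : Finset α)} (hf : rowsInto K₁ f = J₁)
    (hbij : f.Bijective) : (restrictLeft f hf).Bijective := by
  refine ⟨fun x y hxy => ?_, fun k => ?_⟩
  · exact Subtype.ext (by simpa using hbij.1 (Subtype.ext (Subtype.mk.inj hxy)))
  · obtain ⟨j, hj⟩ := hbij.2 ⟨k, mem_union_left _ k.2⟩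
    have hj₁ : (j : α) ∈ J₁ := hf ▸ (mem_rowsInto j).2 (hj ▸ k.2)
    refine ⟨⟨j, hj₁⟩, Subtype.ext ?_⟩
    show (f j : α) = k
    rw [hj]

lemma restrictRight_bijective (hK : Disjoint K₁ K₂) {f : J → (K₁ ∪ K₂ : Finset α)}
    (hf : rowsInto K₁ f = J₁) (hbij : f.Bijective) : (restrictRight f hf).Bijective := by
  refine ⟨fun x y hxy => ?_, fun k => ?_⟩
  · exact Subtype.ext (by simpa using hbij.1 (Subtype.ext (Subtype.mk.inj hxy)))
  · obtain ⟨j, hj⟩ := hbij.2 ⟨k, mem_union_right _ k.2⟩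
    have hj₁ : (j : α) ∉ J₁ := fun h =>
      disjoint_left.1 hK ((mem_rowsInto j).1 (hf ▸ h)) (hj ▸ k.2)
    refine ⟨⟨j, mem_sdiff.2 ⟨j.2, hj₁⟩⟩, Subtype.ext ?_⟩
    show (f j : α) = k
    rw [hj]

lemma card_rowsInto {f : J → (K₁ ∪ K₂ : Finset α)} (hbij : f.Bijective) :
    #(rowsInto K₁ f) = #K₁ := by
  simpa using Fintype.card_of_bijective (restrictLeft_bijective rfl hbij)

lemma glue_restrict {f : J → (K₁ ∪ K₂ : Finset α)} (hf : rowsInto K₁ f = J₁) :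
    glue (restrictLeft f hf) (restrictRight f hf) = f := by
  funext x
  apply Subtype.ext
  by_cases hx : (x : α) ∈ J₁
  · rw [glue_of_mem _ _ hx]; rfl
  · rw [glue_of_notMem _ _ hx]; rfl

lemma restrictLeft_glue (p₁ : J₁ → K₁) (p₂ : (J \ J₁ : Finset α) → K₂)
    (h : rowsInto K₁ (glue p₁ p₂) = J₁) : restrictLeft (glue p₁ p₂) h = p₁ := by
  funext x
  exact Subtype.ext (glue_of_mem p₁ p₂ (x := ⟨x, _⟩) x.2)

lemma restrictRight_glue (p₁ : J₁ → K₁) (p₂ : (J \ J₁ : Finset α) → K₂)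
    (h : rowsInto K₁ (glue p₁ p₂) = J₁) : restrictRight (glue p₁ p₂) h = p₂ := by
  funext x
  exact Subtype.ext (glue_of_notMem p₁ p₂ (x := ⟨x, _⟩) (mem_sdiff.1 x.2).2)

end Laplace

theorem perSub_union {n : ℕ} (Z : Matrix (Fin n) (Fin n) ℂ) {K₁ K₂ : Finset (Fin n)}
    (hK : Disjoint K₁ K₂) (J : Finset (Fin n)) :
    perSub Z J (K₁ ∪ K₂) = setConv #K₁ (fun J₁ => perSub Z J₁ K₁) (fun J₂ => perSub Z J₂ K₂) J := by
  rw [perSub, setConv, ← sum_fiberwise_of_maps_to (g := rowsInto K₁) (t := J.powersetCard #K₁)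
    fun f hf => mem_powersetCard.2 ⟨rowsInto_subset f, card_rowsInto (mem_filter.1 hf).2⟩]
  refine sum_congr rfl fun J₁ hJ₁ => ?_
  have hJ₁J := (mem_powersetCard.1 hJ₁).1
  rw [perSub, perSub, sum_mul_sum, ← sum_product']
  refine sum_bij'
    (fun f hf => (restrictLeft f (mem_filter.1 hf).2, restrictRight f (mem_filter.1 hf).2))
    (fun p _ => glue p.1 p.2) (fun f hf => ?_) (fun p hp => ?_)
    (fun f hf => glue_restrict (mem_filter.1 hf).2)
    (fun p hp => Prod.ext (restrictLeft_glue _ _ (rowsInto_glue hK hJ₁J _ _))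
      (restrictRight_glue _ _ (rowsInto_glue hK hJ₁J _ _)))
    (fun f hf => prod_coe_sort_eq_mul_prod_sdiff hJ₁J _)
  · obtain ⟨hbij, hf⟩ := mem_filter.1 hf
    simp only [mem_product, mem_filter, mem_univ, true_and] at hbij ⊢
    exact ⟨restrictLeft_bijective hf hbij, restrictRight_bijective hK hf hbij⟩
  · simp only [mem_product, mem_filter, mem_univ, true_and] at hp ⊢
    exact ⟨glue_bijective hK hJ₁J hp.1 hp.2, rowsInto_glue hK hJ₁J _ _⟩

section fZ

variable {n : ℕ} (Z : Matrix (Fin n) (Fin n) ℂ)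

lemma fZ_eq (K : Finset (Fin n)) :
    fZ Z K = sumSqNorm univ #K (fun J => perSub Z J K) / (n.choose #K * (#K).factorial ^ 2) := by
  rw [fZ, sumSqNorm, sum_div, mul_sum]
  refine sum_congr rfl fun J _ => ?_
  rw [norm_div, Complex.norm_natCast]
  field_simp

lemma fZ_nonneg (K : Finset (Fin n)) : 0 ≤ fZ Z K := by
  unfold fZ; positivity

lemma perSub_empty : perSub Z ∅ ∅ = 1 := by
  rw [perSub, filter_true_of_mem fun f _ => ⟨fun a => isEmptyElim a, fun b => isEmptyElim b⟩]
  simp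

lemma fZ_empty : fZ Z ∅ = 1 := by
  simp [fZ, perSub_empty]

lemma fZ_union_le {K₁ K₂ : Finset (Fin n)} (hK : Disjoint K₁ K₂) :
    fZ Z (K₁ ∪ K₂) ≤ fZ Z K₁ * fZ Z K₂ := by
  have hk : #K₁ + #K₂ ≤ n := by
    simpa [card_union_of_disjoint hK] using card_le_univ (K₁ ∪ K₂)
  have hconv := sumSqNorm_setConv_le univ #K₁ #K₂
    (fun J₁ => perSub Z J₁ K₁) (fun J₂ => perSub Z J₂ K₂)
  rw [← funext (perSub_union Z hK), card_univ, Fintype.card_fin] at hconv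
  rw [fZ_eq, fZ_eq, fZ_eq, card_union_of_disjoint hK, ← convConst_mul hk]
  calc _ ≤ convConst n #K₁ #K₂ * (sumSqNorm univ #K₁ (fun J => perSub Z J K₁)
          * sumSqNorm univ #K₂ (fun J => perSub Z J K₂))
        / (convConst n #K₁ #K₂ * ((n.choose #K₁ * (#K₁).factorial ^ 2)
          * (n.choose #K₂ * (#K₂).factorial ^ 2))) :=
        div_le_div_of_nonneg_right hconv (mul_nonneg (convConst_nonneg _ _ _) (by positivity))
    _ = _ := by rw [mul_div_mul_left _ _ (convConst_pos hk).ne', div_mul_div_comm]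

lemma fZ_biUnion_le {ι : Type*} [DecidableEq ι] (s : Finset ι) {W : ι → Finset (Fin n)}
    (hW : (s : Set ι).PairwiseDisjoint W) : fZ Z (s.biUnion W) ≤ ∏ i ∈ s, fZ Z (W i) := by
  induction s using Finset.induction_on with
  | empty => simp [fZ_empty]
  | @insert i s hi ih =>
    rw [coe_insert, Set.pairwiseDisjoint_insert_of_notMem (mem_coe.not.2 hi)] at hW
    rw [biUnion_insert, prod_insert hi]
    calc fZ Z (W i ∪ s.biUnion W) ≤ fZ Z (W i) * fZ Z (s.biUnion W) :=
          fZ_union_le Z ((disjoint_biUnion_right _ _ _).2 fun j hj => hW.2 j hj)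
      _ ≤ fZ Z (W i) * ∏ j ∈ s, fZ Z (W j) := by gcongr; exacts [fZ_nonneg Z _, ih hW.1]

end fZ

theorem fZ_log_subadditive_general {n : ℕ} (Z : Matrix (Fin n) (Fin n) ℂ)
    (K : Finset (Fin n)) (d : ℕ) (W : Fin d → Finset (Fin n))
    (hdisj : ∀ r s, r ≠ s → Disjoint (W r) (W s))
    (hunion : Finset.univ.biUnion W = K) :
    fZ Z K ≤ ∏ r, fZ Z (W r) := by
  rw [← hunion]
  exact fZ_biUnion_le Z univ fun r _ s _ hrs => hdisj r s hrs

theorem fZ_log_subadditive {n : ℕ} (hn : 1 ≤ n) (Z : Matrix (Fin n) (Fin n) ℂ)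
    (K : Finset (Fin n)) (d : ℕ) (hd : 1 ≤ d) (W : Fin d → Finset (Fin n))
    (hdisj : ∀ r s, r ≠ s → Disjoint (W r) (W s))
    (hunion : Finset.univ.biUnion W = K) :
    fZ Z K ≤ ∏ r, fZ Z (W r) :=
  fZ_log_subadditive_general Z K d W hdisj hunion
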